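/- Let d ≥ 1 and let β : [0,1] → ℝ^d be a continuous path with 0 < L(β) < ∞. For J ≥ 1 let L_{τ_J}(β) = Σ_{j=1}^J |β(j/J) − β((j−1)/J)|₂ be the chordal length of β along the uniform partition of mesh 1/J and, whenever L_{τ_J}(β) > 0 (which holds for all sufficiently large J), let U_J be a random variable whose law is the mixture Σ_{j=1}^J (|β(j/J) − β((j−1)/J)|₂ / L_{τ_J}(β)) · Unif[(j−1)/J, j/J] of uniform distributions. Then β(U_J) converges in distribution, as J → ∞, to the arc-length measure of β; that is, for every bounded continuous f : ℝ^d → ℝ, E[f(β(U_J))] → ∫₀¹ f(β(q_β(t))) dt. (Lemma S2.4 of the paper.) -/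

import Mathlib

open MeasureTheory Set Filter
open scoped ENNReal unitInterval BoundedContinuousFunction

noncomputable section

abbrev Euc (d : ℕ) := EuclideanSpace ℝ (Fin d)

/-- Projection of `ℝ` onto `[0,1]`. -/
def pr (x : ℝ) : unitInterval := Set.projIcc 0 1 zero_le_one x

/-- The length (total variation on `[0,1]`) of a continuous path. -/
def curveLength {d : ℕ} (β : C(unitInterval, Euc d)) : ℝ≥0∞ :=
  eVariationOn β Set.univ

/-- The length of `β` restricted to `[0,t]`. -/
def lengthTo {d : ℕ} (β : C(unitInterval, Euc d)) (t : unitInterval) : ℝ≥0∞ :=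
  eVariationOn β (Set.Icc 0 t)

/-- The normalized arc-length function `s_β(t) = L(β|_{[0,t]})/L(β)`. -/
def sFrac {d : ℕ} (β : C(unitInterval, Euc d)) (t : unitInterval) : ℝ≥0∞ :=
  lengthTo β t / curveLength β

/-- The generalized inverse `q_β(u) = inf {t : s_β(t) ≥ u}`, as a point of `[0,1]`. -/
def qPoint {d : ℕ} (β : C(unitInterval, Euc d)) (u : ℝ) : unitInterval :=
  pr (sInf {x : ℝ | ∃ t : unitInterval, (t : ℝ) = x ∧ ENNReal.ofReal u ≤ sFrac β t})

/-- The chordal length `L_{τ_J}(β)` of `β` along the uniform partition of mesh `1/J`. -/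
def chordal {d : ℕ} (β : C(unitInterval, Euc d)) (J : ℕ) : ℝ :=
  ∑ j ∈ Finset.range J, dist (β (pr (((j : ℝ) + 1) / J))) (β (pr ((j : ℝ) / J)))

/-- The law of `U_J`: the mixture `Σ_j (|β(j/J) − β((j−1)/J)| / L_{τ_J}(β)) · Unif[(j−1)/J, j/J]`. -/
def mixLaw {d : ℕ} (β : C(unitInterval, Euc d)) (J : ℕ) : Measure ℝ :=
  ∑ j ∈ Finset.range J,
    ENNReal.ofReal (dist (β (pr (((j : ℝ) + 1) / J))) (β (pr ((j : ℝ) / J))) / chordal β J) •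
      ((J : ℝ≥0∞) • volume.restrict (Set.Icc ((j : ℝ) / J) (((j : ℝ) + 1) / J)))

/-! The chordal lengths `L_{τ_J}(β)` converge to `L(β)`: they never exceed it, and the chord sum
of any fixed partition is the limit of chord sums over its points rounded down to the grid, which
the triangle inequality bounds by `L_{τ_J}(β)`.

On the `j`-th grid cell `[j/J, (j+1)/J]`, `f ∘ β` differs from its value `F_j` at `j/J` by at
most its modulus of continuity `ω(1/J)`; so does `f ∘ β ∘ q_β` on `(s_β(j/J), s_β((j+1)/J)]`,
which `q_β` maps into the cell. Hence both `E[f(β(U_J))]` and `∫₀¹ f(β(q_β(t))) dt` are within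
`ω(1/J)` of averages of the `F_j`, with weights `|β((j+1)/J) − β(j/J)| / L_{τ_J}(β)` and
`s_β((j+1)/J) − s_β(j/J)` respectively. Both weight vectors are probability vectors dominating
`|β((j+1)/J) − β(j/J)| / L(β)`, so their ℓ¹-distance is at most `2 (1 − L_{τ_J}(β) / L(β)) → 0`.
-/

open Topology

section Variation

variable {α E : Type*} [LinearOrder α] [PseudoMetricSpace E]

lemma sum_dist_le_toReal_eVariationOn {f : α → E} {s : Set α} (hf : eVariationOn f s ≠ ⊤)
    {u : ℕ → α} (hu : Monotone u) (hus : ∀ i, u i ∈ s) (n : ℕ) :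
    ∑ i ∈ Finset.range n, dist (f (u (i + 1))) (f (u i)) ≤ (eVariationOn f s).toReal := by
  have h := ENNReal.toReal_mono hf (eVariationOn.sum_le (f := f) (n := n) hu hus)
  simpa only [ENNReal.toReal_sum fun _ _ => edist_ne_top _ _, ← dist_edist] using h

lemma exists_lt_sum_dist_of_ofReal_lt_eVariationOn {f : α → E} {s : Set α} {a : ℝ}
    (ha : ENNReal.ofReal a < eVariationOn f s) :
    ∃ (n : ℕ) (u : ℕ → α), Monotone u ∧ (∀ i, u i ∈ s) ∧
      a < ∑ i ∈ Finset.range n, dist (f (u (i + 1))) (f (u i)) := by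
  obtain ⟨⟨n, u, hu, hus⟩, hlt⟩ := lt_iSup_iff.mp ha
  refine ⟨n, u, hu, hus, (ENNReal.ofReal_lt_ofReal_iff'.mp ?_).1⟩
  simpa only [edist_dist, ENNReal.ofReal_sum_of_nonneg fun _ _ => dist_nonneg] using hlt

lemma sum_dist_comp_le_sum_Ico (x : ℕ → E) {k : ℕ → ℕ} (hk : Monotone k) (n : ℕ) :
    ∑ i ∈ Finset.range n, dist (x (k (i + 1))) (x (k i)) ≤
      ∑ j ∈ Finset.Ico (k 0) (k n), dist (x (j + 1)) (x j) := by
  induction n with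
  | zero => simp
  | succ n ih =>
    rw [Finset.sum_range_succ, ← Finset.sum_Ico_consecutive _ (hk n.zero_le) (hk n.le_succ)]
    refine add_le_add ih ?_
    simpa only [dist_comm] using dist_le_Ico_sum_dist x (hk n.le_succ)

end Variation

lemma abs_intervalIntegral_sub_mul_le {φ : ℝ → ℝ} {a b c ε : ℝ} (hab : a ≤ b)
    (hφ : IntervalIntegrable φ volume a b) (h : ∀ x ∈ Ioc a b, |φ x - c| ≤ ε) :
    |(∫ x in a..b, φ x) - (b - a) * c| ≤ ε * (b - a) := by
  have := intervalIntegral.norm_integral_le_of_norm_le_const (f := fun x => φ x - c)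
    (by rwa [uIoc_of_le hab])
  rwa [intervalIntegral.integral_sub hφ intervalIntegrable_const, intervalIntegral.integral_const,
    smul_eq_mul, Real.norm_eq_abs, abs_of_nonneg (sub_nonneg.mpr hab)] at this

lemma abs_setIntegral_Icc_sub_sum_le {φ : ℝ → ℝ} {s : ℕ → ℝ} (hs : Monotone s)
    {n : ℕ} (hφ : IntegrableOn φ (Icc (s 0) (s n))) {c : ℕ → ℝ} {ε : ℝ}
    (h : ∀ j < n, ∀ x ∈ Ioc (s j) (s (j + 1)), |φ x - c j| ≤ ε) :
    |(∫ x in Icc (s 0) (s n), φ x) - ∑ j ∈ Finset.range n, (s (j + 1) - s j) * c j| ≤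
      ε * (s n - s 0) := by
  have hint (j : ℕ) (hj : j < n) : IntervalIntegrable φ volume (s j) (s (j + 1)) := by
    refine (hφ.mono_set ?_).intervalIntegrable
    rw [uIcc_of_le (hs j.le_succ)]
    exact Icc_subset_Icc (hs j.zero_le) (hs hj)
  have hsplit : ∫ x in Icc (s 0) (s n), φ x =
      ∑ j ∈ Finset.range n, ∫ x in s j..s (j + 1), φ x := by
    rw [intervalIntegral.sum_integral_adjacent_intervals hint,
      intervalIntegral.integral_of_le (hs n.zero_le), integral_Icc_eq_integral_Ioc]
  rw [hsplit, ← Finset.sum_sub_distrib, ← Finset.sum_range_sub, Finset.mul_sum]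
  refine (Finset.abs_sum_le_sum_abs _ _).trans (Finset.sum_le_sum fun j hj => ?_)
  have hj := Finset.mem_range.mp hj
  exact abs_intervalIntegral_sub_mul_le (hs j.le_succ) (hint j hj) (h j hj)

lemma abs_sum_mul_sub_sum_mul_le {ι : Type*} (s : Finset ι) {w v m F : ι → ℝ} {M : ℝ}
    (hw : ∀ i ∈ s, m i ≤ w i) (hv : ∀ i ∈ s, m i ≤ v i)
    (hF : ∀ i ∈ s, |F i| ≤ M) :
    |∑ i ∈ s, w i * F i - ∑ i ∈ s, v i * F i| ≤
      M * (∑ i ∈ s, w i + ∑ i ∈ s, v i - 2 * ∑ i ∈ s, m i) := by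
  have hterm : ∀ i ∈ s, |w i * F i - v i * F i| ≤ M * ((w i - m i) + (v i - m i)) := by
    intro i hi
    rw [← sub_mul, abs_mul, mul_comm]
    refine mul_le_mul (hF i hi) ?_ (abs_nonneg _) ((abs_nonneg _).trans (hF i hi))
    exact abs_sub_le_iff.mpr ⟨by linarith [hv i hi], by linarith [hw i hi]⟩
  rw [← Finset.sum_sub_distrib]
  refine (Finset.abs_sum_le_sum_abs _ _).trans ((Finset.sum_le_sum hterm).trans_eq ?_)
  rw [← Finset.mul_sum, Finset.sum_add_distrib, Finset.sum_sub_distrib, Finset.sum_sub_distrib]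
  ring

def gridPoint (J j : ℕ) : unitInterval := pr (j / J)

def chord {d : ℕ} (β : C(unitInterval, Euc d)) (J j : ℕ) : ℝ :=
  dist (β (gridPoint J (j + 1))) (β (gridPoint J j))

lemma pr_mono : Monotone pr := Set.monotone_projIcc zero_le_one

lemma pr_coe (t : unitInterval) : pr t = t := Set.projIcc_val zero_le_one t

lemma pr_natCast_add_one_div (J j : ℕ) : pr (((j : ℝ) + 1) / J) = gridPoint J (j + 1) := by
  rw [gridPoint, Nat.cast_succ]

lemma gridPoint_mono (J : ℕ) : Monotone (gridPoint J) := fun _ _ hij =>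
  pr_mono (div_le_div_of_nonneg_right (Nat.cast_le.mpr hij) J.cast_nonneg)

lemma coe_gridPoint {J j : ℕ} (hj : j ≤ J) : (gridPoint J j : ℝ) = j / J := by
  have hle : (j : ℝ) ≤ J := by exact_mod_cast hj
  rw [gridPoint, pr,
    Set.projIcc_of_mem zero_le_one ⟨by positivity, div_le_one_of_le₀ hle J.cast_nonneg⟩]

lemma gridPoint_zero (J : ℕ) : gridPoint J 0 = 0 := by
  simp [gridPoint, pr]

lemma gridPoint_self {J : ℕ} (hJ : J ≠ 0) : gridPoint J J = 1 := by
  simp [gridPoint, pr, hJ]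

lemma dist_gridPoint_le {J j : ℕ} (hj : j < J) {s : unitInterval}
    (hs : s ∈ Icc (gridPoint J j) (gridPoint J (j + 1))) : dist s (gridPoint J j) ≤ 1 / J := by
  have h₁ : (gridPoint J j : ℝ) ≤ s := hs.1
  have h₂ : (s : ℝ) ≤ gridPoint J (j + 1) := hs.2
  rw [coe_gridPoint hj.le] at h₁
  rw [coe_gridPoint hj, Nat.cast_succ] at h₂
  rw [Subtype.dist_eq, coe_gridPoint hj.le, Real.dist_eq, abs_of_nonneg (by linarith)]
  linarith [add_div (j : ℝ) 1 J]

lemma tendsto_gridPoint_floor (t : unitInterval) :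
    Tendsto (fun J : ℕ => gridPoint J ⌊(t : ℝ) * J⌋₊) atTop (𝓝 t) := by
  have hfloor (J : ℕ) : ⌊(t : ℝ) * J⌋₊ ≤ J :=
    Nat.floor_le_of_le (mul_le_of_le_one_left J.cast_nonneg t.2.2)
  refine tendsto_subtype_rng.mpr ?_
  simp only [coe_gridPoint (hfloor _)]
  exact (tendsto_nat_floor_mul_div_atTop t.2.1).comp tendsto_natCast_atTop_atTop

section Path

variable {d : ℕ} (β : C(unitInterval, Euc d))

lemma chordal_eq_sum_chord (J : ℕ) : chordal β J = ∑ j ∈ Finset.range J, chord β J j := by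
  simp only [chordal, chord, pr_natCast_add_one_div]
  rfl

lemma chord_nonneg (J j : ℕ) : 0 ≤ chord β J j := dist_nonneg

lemma chordal_nonneg (J : ℕ) : 0 ≤ chordal β J :=
  Finset.sum_nonneg fun _ _ => dist_nonneg

lemma ne_zero_of_chordal_pos {J : ℕ} (hc : 0 < chordal β J) : J ≠ 0 := by
  rintro rfl
  simp [chordal] at hc

lemma chordal_le_toReal_curveLength (hL' : curveLength β ≠ ⊤) (J : ℕ) :
    chordal β J ≤ (curveLength β).toReal := by
  rw [chordal_eq_sum_chord]
  exact sum_dist_le_toReal_eVariationOn hL' (gridPoint_mono J) (fun _ => mem_univ _) J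

lemma sum_dist_floor_le_chordal {u : ℕ → unitInterval} (hu : Monotone u) (n J : ℕ) :
    ∑ i ∈ Finset.range n, dist (β (gridPoint J ⌊(u (i + 1) : ℝ) * J⌋₊))
      (β (gridPoint J ⌊(u i : ℝ) * J⌋₊)) ≤ chordal β J := by
  set k : ℕ → ℕ := fun i => ⌊(u i : ℝ) * J⌋₊
  have hk : Monotone k := fun i j hij =>
    Nat.floor_mono (mul_le_mul_of_nonneg_right (hu hij) J.cast_nonneg)
  have hkJ : k n ≤ J := Nat.floor_le_of_le (mul_le_of_le_one_left J.cast_nonneg (u n).2.2)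
  refine (sum_dist_comp_le_sum_Ico (fun j => β (gridPoint J j)) hk n).trans ?_
  rw [chordal_eq_sum_chord]
  refine Finset.sum_le_sum_of_subset_of_nonneg (fun j hj => ?_) fun _ _ _ => dist_nonneg
  exact Finset.mem_range.mpr ((Finset.mem_Ico.mp hj).2.trans_le hkJ)

theorem tendsto_chordal (hL' : curveLength β ≠ ⊤) :
    Tendsto (chordal β) atTop (𝓝 (curveLength β).toReal) := by
  refine tendsto_order.mpr ⟨fun a ha => ?_, fun b hb => Eventually.of_forall fun J =>
    (chordal_le_toReal_curveLength β hL' J).trans_lt hb⟩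
  rcases lt_or_ge a 0 with ha₀ | ha₀
  · exact Eventually.of_forall fun J => ha₀.trans_le (chordal_nonneg β J)
  obtain ⟨n, u, hu, -, hau⟩ := exists_lt_sum_dist_of_ofReal_lt_eVariationOn
    ((ENNReal.ofReal_lt_iff_lt_toReal ha₀ hL').mpr ha)
  have hlim : Tendsto (fun J : ℕ => ∑ i ∈ Finset.range n,
      dist (β (gridPoint J ⌊(u (i + 1) : ℝ) * J⌋₊)) (β (gridPoint J ⌊(u i : ℝ) * J⌋₊)))
      atTop (𝓝 (∑ i ∈ Finset.range n, dist (β (u (i + 1))) (β (u i)))) :=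
    tendsto_finsetSum _ fun i _ =>
      ((β.continuous.tendsto _).comp (tendsto_gridPoint_floor _)).dist
        ((β.continuous.tendsto _).comp (tendsto_gridPoint_floor _))
  filter_upwards [hlim.eventually (eventually_gt_nhds hau)] with J hJ
  exact hJ.trans_le (sum_dist_floor_le_chordal β hu n J)

lemma lengthTo_zero : lengthTo β 0 = 0 :=
  eVariationOn.subsingleton β (by rw [Set.Icc_self]; exact subsingleton_singleton)

lemma lengthTo_one : lengthTo β 1 = curveLength β := by
  have : Icc (0 : unitInterval) 1 = univ :=
    eq_univ_of_forall fun _ => ⟨unitInterval.nonneg', unitInterval.le_one'⟩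
  rw [lengthTo, curveLength, this]

lemma lengthTo_le_curveLength (t : unitInterval) : lengthTo β t ≤ curveLength β :=
  eVariationOn.mono β (subset_univ _)

lemma lengthTo_add_eVariationOn {t t' : unitInterval} (h : t ≤ t') :
    lengthTo β t + eVariationOn β (Icc t t') = lengthTo β t' := by
  simpa only [univ_inter, lengthTo] using
    eVariationOn.Icc_add_Icc β (s := univ) unitInterval.nonneg' h (mem_univ t)

lemma sFrac_mono : Monotone (sFrac β) := fun _ _ h =>
  ENNReal.div_le_div_right (eVariationOn.mono β (Icc_subset_Icc_right h)) _

lemma sFrac_ne_top (hL : curveLength β ≠ 0) (hL' : curveLength β ≠ ⊤) (t : unitInterval) :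
    sFrac β t ≠ ⊤ :=
  ENNReal.div_ne_top (ne_top_of_le_ne_top hL' (lengthTo_le_curveLength β t)) hL

lemma sFrac_zero : sFrac β 0 = 0 := by
  rw [sFrac, lengthTo_zero, ENNReal.zero_div]

lemma sFrac_one (hL : curveLength β ≠ 0) (hL' : curveLength β ≠ ⊤) : sFrac β 1 = 1 := by
  rw [sFrac, lengthTo_one, ENNReal.div_self hL hL']

lemma toReal_sFrac_sub_toReal_sFrac (hL' : curveLength β ≠ ⊤) {t t' : unitInterval}
    (h : t ≤ t') : (sFrac β t').toReal - (sFrac β t).toReal =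
      (eVariationOn β (Icc t t')).toReal / (curveLength β).toReal := by
  have hfin : eVariationOn β (Icc t t') ≠ ⊤ :=
    ne_top_of_le_ne_top hL' (eVariationOn.mono β (subset_univ _))
  rw [sFrac, sFrac, ENNReal.toReal_div, ENNReal.toReal_div, ← lengthTo_add_eVariationOn β h,
    ENNReal.toReal_add (ne_top_of_le_ne_top hL' (lengthTo_le_curveLength β t)) hfin]
  ring

lemma dist_div_le_toReal_sFrac_sub (hL' : curveLength β ≠ ⊤) {t t' : unitInterval}
    (h : t ≤ t') : dist (β t') (β t) / (curveLength β).toReal ≤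
      (sFrac β t').toReal - (sFrac β t).toReal := by
  rw [toReal_sFrac_sub_toReal_sFrac β hL' h, dist_edist]
  gcongr
  · exact ne_top_of_le_ne_top hL' (eVariationOn.mono β (subset_univ _))
  · exact eVariationOn.edist_le β (right_mem_Icc.mpr h) (left_mem_Icc.mpr h)

lemma qSet_bddBelow (u : ℝ) :
    BddBelow {x : ℝ | ∃ t : unitInterval, (t : ℝ) = x ∧ ENNReal.ofReal u ≤ sFrac β t} :=
  ⟨0, fun _ ⟨t, ht, _⟩ => ht ▸ t.2.1⟩

lemma qPoint_le {u : ℝ} {t : unitInterval} (h : ENNReal.ofReal u ≤ sFrac β t) :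
    qPoint β u ≤ t :=
  (pr_mono (csInf_le (qSet_bddBelow β u) ⟨t, rfl, h⟩)).trans_eq (pr_coe t)

lemma le_qPoint {u : ℝ} {t t' : unitInterval} (ht : sFrac β t < ENNReal.ofReal u)
    (ht' : ENNReal.ofReal u ≤ sFrac β t') : t ≤ qPoint β u := by
  refine (pr_coe t).symm.trans_le (pr_mono (le_csInf ⟨t', t', rfl, ht'⟩ ?_))
  rintro _ ⟨s, rfl, hs⟩
  by_contra! hst
  exact (hs.trans (sFrac_mono β (Subtype.coe_lt_coe.mp hst).le)).not_gt ht

lemma qPoint_mem_Icc (hL : curveLength β ≠ 0) (hL' : curveLength β ≠ ⊤) {u : ℝ}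
    {t t' : unitInterval} (hu : u ∈ Ioc (sFrac β t).toReal (sFrac β t').toReal) :
    qPoint β u ∈ Icc t t' := by
  have ht' : ENNReal.ofReal u ≤ sFrac β t' := ENNReal.ofReal_le_of_le_toReal hu.2
  exact ⟨le_qPoint β ((ENNReal.lt_ofReal_iff_toReal_lt (sFrac_ne_top β hL hL' t)).mpr hu.1) ht',
    qPoint_le β ht'⟩

lemma qPoint_monotoneOn (hL : curveLength β ≠ 0) (hL' : curveLength β ≠ ⊤) :
    MonotoneOn (qPoint β) (Iic 1) := by
  intro u _ v hv huv
  refine pr_mono (csInf_le_csInf (qSet_bddBelow β u) ⟨1, 1, rfl, ?_⟩ ?_)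
  · rw [sFrac_one β hL hL']
    exact ENNReal.ofReal_le_one.mpr hv
  · rintro _ ⟨t, rfl, h⟩
    exact ⟨t, rfl, (ENNReal.ofReal_le_ofReal huv).trans h⟩

lemma integrableOn_comp_qPoint (hL : curveLength β ≠ 0) (hL' : curveLength β ≠ ⊤)
    {φ : unitInterval → ℝ} (hφ : Continuous φ) :
    IntegrableOn (fun u => φ (qPoint β u)) (Icc 0 1) := by
  obtain ⟨C, hC⟩ := (isCompact_range hφ).isBounded.exists_norm_le
  have hq : AEMeasurable (qPoint β) (volume.restrict (Icc 0 1)) :=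
    aemeasurable_restrict_of_monotoneOn measurableSet_Icc
      ((qPoint_monotoneOn β hL hL').mono Icc_subset_Iic_self)
  exact IntegrableOn.of_bound measure_Icc_lt_top
    (hφ.measurable.comp_aemeasurable hq).aestronglyMeasurable C
    (Eventually.of_forall fun u => hC _ (mem_range_self _))

lemma mixLaw_eq_sum_chord (J : ℕ) : mixLaw β J = ∑ j ∈ Finset.range J,
    ENNReal.ofReal (chord β J j / chordal β J) •
      ((J : ℝ≥0∞) • volume.restrict (Icc ((j : ℝ) / J) (((j : ℝ) + 1) / J))) := by
  simp only [mixLaw, pr_natCast_add_one_div]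
  rfl

lemma integral_mixLaw {φ : ℝ → ℝ} (hφ : Continuous φ) (J : ℕ) :
    ∫ x, φ x ∂mixLaw β J = ∑ j ∈ Finset.range J,
      chord β J j / chordal β J * (J * ∫ x in (j / J : ℝ)..((j + 1) / J), φ x) := by
  have hint : ∀ j ∈ Finset.range J, Integrable φ
      (ENNReal.ofReal (chord β J j / chordal β J) •
        ((J : ℝ≥0∞) • volume.restrict (Icc ((j : ℝ) / J) (((j : ℝ) + 1) / J)))) :=
    fun _ _ => (hφ.integrableOn_Icc.smul_measure (ENNReal.natCast_ne_top J)).smul_measure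
      ENNReal.ofReal_ne_top
  rw [mixLaw_eq_sum_chord, integral_finsetSum_measure hint]
  refine Finset.sum_congr rfl fun j _ => ?_
  rw [integral_smul_measure, integral_smul_measure,
    ENNReal.toReal_ofReal (div_nonneg (chord_nonneg β J j) (chordal_nonneg β J)),
    ENNReal.toReal_natCast, intervalIntegral.integral_of_le (by gcongr; linarith),
    integral_Icc_eq_integral_Ioc]
  rfl

theorem abs_integral_mixLaw_sub_sum_le {φ : unitInterval → ℝ} (hφ : Continuous φ) {J : ℕ}
    (hc : 0 < chordal β J) {ε : ℝ}
    (hε : ∀ j < J, ∀ s ∈ Icc (gridPoint J j) (gridPoint J (j + 1)),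
      |φ s - φ (gridPoint J j)| ≤ ε) :
    |(∫ x, φ (pr x) ∂mixLaw β J) -
      ∑ j ∈ Finset.range J, chord β J j / chordal β J * φ (gridPoint J j)| ≤ ε := by
  have hJ : (0 : ℝ) < J := Nat.cast_pos.mpr (Nat.pos_of_ne_zero (ne_zero_of_chordal_pos β hc))
  have hφpr : Continuous fun x => φ (pr x) := hφ.comp (continuous_projIcc (h := zero_le_one))
  have hcell : ∀ j < J,
      |J * (∫ x in (j / J : ℝ)..((j + 1) / J), φ (pr x)) - φ (gridPoint J j)| ≤ ε := by
    intro j hj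
    set A := ∫ x in (j / J : ℝ)..((j + 1) / J), φ (pr x)
    have h : |A - 1 / J * φ (gridPoint J j)| ≤ ε * (1 / J) := by
      have := abs_intervalIntegral_sub_mul_le (c := φ (gridPoint J j)) (by gcongr; linarith)
        (hφpr.intervalIntegrable _ _) fun x hx => hε j hj _
          ⟨pr_mono hx.1.le, (pr_mono hx.2).trans_eq (pr_natCast_add_one_div J j)⟩
      rwa [← sub_div, add_sub_cancel_left] at this
    calc |J * A - φ (gridPoint J j)| = |J * (A - 1 / J * φ (gridPoint J j))| := by
          rw [mul_sub, ← mul_assoc, mul_one_div_cancel hJ.ne', one_mul]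
      _ = J * |A - 1 / J * φ (gridPoint J j)| := by rw [abs_mul, abs_of_pos hJ]
      _ ≤ J * (ε * (1 / J)) := mul_le_mul_of_nonneg_left h hJ.le
      _ = ε := by field_simp
  have hw (j : ℕ) : 0 ≤ chord β J j / chordal β J := div_nonneg (chord_nonneg β J j) hc.le
  rw [integral_mixLaw β hφpr, ← Finset.sum_sub_distrib]
  calc _ ≤ ∑ j ∈ Finset.range J, chord β J j / chordal β J * ε := by
        refine (Finset.abs_sum_le_sum_abs _ _).trans (Finset.sum_le_sum fun j hj => ?_)
        rw [← mul_sub, abs_mul, abs_of_nonneg (hw j)]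
        exact mul_le_mul_of_nonneg_left (hcell j (Finset.mem_range.mp hj)) (hw j)
    _ = ε := by
      rw [← Finset.sum_mul, ← Finset.sum_div, ← chordal_eq_sum_chord, div_self hc.ne',
        one_mul]

theorem abs_integral_qPoint_sub_sum_le (hL : curveLength β ≠ 0) (hL' : curveLength β ≠ ⊤)
    {φ : unitInterval → ℝ} (hφ : Continuous φ) {t : ℕ → unitInterval} (ht : Monotone t)
    {n : ℕ} (ht₀ : t 0 = 0) (htn : t n = 1) {ε : ℝ}
    (hε : ∀ j < n, ∀ s ∈ Icc (t j) (t (j + 1)), |φ s - φ (t j)| ≤ ε) :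
    |(∫ u in Icc 0 1, φ (qPoint β u)) -
      ∑ j ∈ Finset.range n, ((sFrac β (t (j + 1))).toReal - (sFrac β (t j)).toReal) *
        φ (t j)| ≤ ε := by
  set s : ℕ → ℝ := fun j => (sFrac β (t j)).toReal
  have hs : Monotone s := fun _ _ hij =>
    ENNReal.toReal_mono (sFrac_ne_top β hL hL' _) (sFrac_mono β (ht hij))
  have hs₀ : s 0 = 0 := by simp only [s, ht₀, sFrac_zero, ENNReal.toReal_zero]
  have hsn : s n = 1 := by simp only [s, htn, sFrac_one β hL hL', ENNReal.toReal_one]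
  have hint : IntegrableOn (fun u => φ (qPoint β u)) (Icc (s 0) (s n)) := by
    rw [hs₀, hsn]
    exact integrableOn_comp_qPoint β hL hL' hφ
  have h := abs_setIntegral_Icc_sub_sum_le hs hint fun j hj u hu =>
    hε j hj _ (qPoint_mem_Icc β hL hL' hu)
  rwa [hs₀, hsn, sub_zero, mul_one] at h

theorem abs_sum_chord_div_sub_sum_sFrac_le (hL : curveLength β ≠ 0)
    (hL' : curveLength β ≠ ⊤) {J : ℕ} (hc : 0 < chordal β J) {φ : unitInterval → ℝ}
    {M : ℝ} (hM : ∀ t, |φ t| ≤ M) :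
    |∑ j ∈ Finset.range J, chord β J j / chordal β J * φ (gridPoint J j) -
      ∑ j ∈ Finset.range J, ((sFrac β (gridPoint J (j + 1))).toReal -
        (sFrac β (gridPoint J j)).toReal) * φ (gridPoint J j)|
      ≤ 2 * M * (1 - chordal β J / (curveLength β).toReal) := by
  have hw (j : ℕ) : chord β J j / (curveLength β).toReal ≤ chord β J j / chordal β J :=
    div_le_div_of_nonneg_left (chord_nonneg β J j) hc (chordal_le_toReal_curveLength β hL' J)
  have hsum_w : ∑ j ∈ Finset.range J, chord β J j / chordal β J = 1 := by
    rw [← Finset.sum_div, ← chordal_eq_sum_chord, div_self hc.ne']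
  have hsum_v : ∑ j ∈ Finset.range J,
      ((sFrac β (gridPoint J (j + 1))).toReal - (sFrac β (gridPoint J j)).toReal) = 1 := by
    rw [Finset.sum_range_sub (fun j => (sFrac β (gridPoint J j)).toReal),
      gridPoint_self (ne_zero_of_chordal_pos β hc), gridPoint_zero, sFrac_one β hL hL',
      sFrac_zero, ENNReal.toReal_one, ENNReal.toReal_zero, sub_zero]
  have hsum_m : ∑ j ∈ Finset.range J, chord β J j / (curveLength β).toReal =
      chordal β J / (curveLength β).toReal := by
    rw [← Finset.sum_div, ← chordal_eq_sum_chord]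
  refine (abs_sum_mul_sub_sum_mul_le (Finset.range J) (fun j _ => hw j)
    (fun j _ => dist_div_le_toReal_sFrac_sub β hL' (gridPoint_mono J j.le_succ))
    (fun j _ => hM (gridPoint J j))).trans_eq ?_
  rw [hsum_w, hsum_v, hsum_m]
  ring

end Path

theorem mixture_tendsto_arcLength_measure_general
    (d : ℕ) (β : C(unitInterval, Euc d))
    (hL : 0 < curveLength β) (hL' : curveLength β < ⊤) :
    (∀ᶠ J in atTop, 0 < chordal β J) ∧
    ∀ f : Euc d →ᵇ ℝ,
      Tendsto (fun J : ℕ => ∫ x, f (β (pr x)) ∂(mixLaw β J)) atTop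
        (nhds (∫ t in Set.Icc (0:ℝ) 1, f (β (qPoint β t)))) := by
  set L := (curveLength β).toReal
  have hLpos : 0 < L := ENNReal.toReal_pos hL.ne' hL'.ne
  have hchord : Tendsto (chordal β) atTop (𝓝 L) := tendsto_chordal β hL'.ne
  refine ⟨hchord.eventually (eventually_gt_nhds hLpos), fun f => ?_⟩
  refine Metric.tendsto_nhds.mpr fun ε hε => ?_
  set φ : unitInterval → ℝ := fun t => f (β t)
  have hφ : Continuous φ := f.continuous.comp β.continuous
  obtain ⟨δ, hδ, hφδ⟩ := Metric.uniformContinuous_iff.mp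
    (CompactSpace.uniformContinuous_of_continuous hφ) (ε / 4) (by positivity)
  have hgap : Tendsto (fun J => 2 * ‖f‖ * (1 - chordal β J / L)) atTop (𝓝 0) := by
    simpa [div_self hLpos.ne'] using ((hchord.div_const L).const_sub 1).const_mul (2 * ‖f‖)
  filter_upwards [hchord.eventually (eventually_gt_nhds hLpos),
    tendsto_one_div_atTop_nhds_zero_nat.eventually (eventually_lt_nhds hδ),
    hgap.eventually (eventually_lt_nhds (half_pos hε))] with J hc hJδ hJgap
  have hcell : ∀ j < J, ∀ s ∈ Icc (gridPoint J j) (gridPoint J (j + 1)),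
      |φ s - φ (gridPoint J j)| ≤ ε / 4 := fun j hj s hs =>
    (hφδ ((dist_gridPoint_le hj hs).trans_lt hJδ)).le
  have hmix := abs_le.mp (abs_integral_mixLaw_sub_sum_le β hφ hc hcell)
  have hweights := abs_le.mp (abs_sum_chord_div_sub_sum_sFrac_le β hL.ne' hL'.ne hc
    (φ := φ) fun t => (f.norm_coe_le_norm (β t)))
  have hlim := abs_le.mp (abs_integral_qPoint_sub_sum_le β hL.ne' hL'.ne hφ (gridPoint_mono J)
    (gridPoint_zero J) (gridPoint_self (ne_zero_of_chordal_pos β hc)) hcell)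
  rw [Real.dist_eq, abs_sub_lt_iff]
  constructor <;> linarith

/-- Lemma S2.4 of the paper: for a rectifiable path `β` of positive length, the chordal
lengths along uniform partitions are eventually positive, and `β(U_J)` converges in
distribution to the arc-length measure of `β`: for every bounded continuous `f`,
`E[f(β(U_J))] → ∫₀¹ f(β(q_β(t))) dt`. -/
theorem mixture_tendsto_arcLength_measure
    (d : ℕ) (hd : 1 ≤ d) (β : C(unitInterval, Euc d))
    (hL : 0 < curveLength β) (hL' : curveLength β < ⊤) :
    (∀ᶠ J in atTop, 0 < chordal β J) ∧
    ∀ f : Euc d →ᵇ ℝ,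
      Tendsto (fun J : ℕ => ∫ x, f (β (pr x)) ∂(mixLaw β J)) atTop
        (nhds (∫ t in Set.Icc (0:ℝ) 1, f (β (qPoint β t)))) :=
  mixture_tendsto_arcLength_measure_general d β hL hL'
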